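/- arXiv:1706.04081 — 4 statements merged into one kernel-verified Lean document; each statement's English description precedes it below -/
import Mathlib

section
/- Let φ ∈ [0,1]. Define L(γ) = (γ/2 + γ(1-γ))^{φ} · (γ/2 + (1-γ)²)^{1-φ} interpreted via h(γ) = φ·log(γ/2 + γ(1-γ)) + (1-φ)·log(γ/2 + (1-γ)²) on (0,1). If φ ≥ 9/16 then γ = 3/4 maximizes L over [0,1]; if φ < 9/16 then γ = (3 - √(9 - 16φ))/4 maximizes L over [0,1]. -/
/-!
The two bases of `LfrBin φ γ` sum to one, so `LfrBin φ γ = a ^ φ * (1 - a) ^ (1 - φ)` with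
`a = γ / 2 + γ * (1 - γ) = 9 / 16 - (γ - 3 / 4) ^ 2`, which sweeps out `[0, 9 / 16]`.
By the weighted AM–GM (Gibbs) inequality, `a ↦ a ^ φ * (1 - a) ^ (1 - φ)` increases up to `a = φ`
and decreases after it. Hence the maximum over `γ` is at `a = 9 / 16` (i.e. `γ = 3 / 4`) when
`φ ≥ 9 / 16`, and at `a = φ` otherwise, which the smaller root of `γ / 2 + γ * (1 - γ) = φ` attains.
-/

/-- Fully relaxed per-sample likelihood for the binary anomaly-detection model:
`L(γ) = (γ/2 + γ(1-γ))^φ · (γ/2 + (1-γ)²)^(1-φ)` (real-exponent powers). -/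
noncomputable def LfrBin (φ γ : ℝ) : ℝ :=
  (γ / 2 + γ * (1 - γ)) ^ φ * (γ / 2 + (1 - γ) ^ 2) ^ (1 - φ)

open Real

/-- The Bernoulli likelihood of parameter `a`, per sample, on data with a fraction `p` of ones. -/
noncomputable def bernoulliLik (p a : ℝ) : ℝ :=
  a ^ p * (1 - a) ^ (1 - p)

/-- The probability of the score `1` in the binary model with parameter `γ`. -/
noncomputable def probScoreOne (γ : ℝ) : ℝ :=
  γ / 2 + γ * (1 - γ)

theorem bernoulliLik_le_of_mul_nonpos {p a c : ℝ} (hp₀ : 0 ≤ p) (hp₁ : p ≤ 1) (ha₀ : 0 ≤ a)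
    (ha₁ : a ≤ 1) (hc₀ : 0 < c) (hc₁ : c < 1) (h : (a - c) * (p - c) ≤ 0) :
    bernoulliLik p a ≤ bernoulliLik p c := by
  have hc₁' : 0 < 1 - c := by linarith
  have amgm := geom_mean_le_arith_mean2_weighted hp₀ (sub_nonneg.2 hp₁)
    (div_nonneg ha₀ hc₀.le) (div_nonneg (sub_nonneg.2 ha₁) hc₁'.le) (add_sub_cancel p 1)
  have mean_le_one : p * (a / c) + (1 - p) * ((1 - a) / (1 - c)) ≤ 1 := by
    have gap_eq : p * (a / c) + (1 - p) * ((1 - a) / (1 - c)) - 1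
        = (a - c) * (p - c) / (c * (1 - c)) := by
      field_simp
      ring
    rw [← sub_nonpos, gap_eq]
    exact div_nonpos_of_nonpos_of_nonneg h (mul_pos hc₀ hc₁').le
  have ratio : (a / c) ^ p * ((1 - a) / (1 - c)) ^ (1 - p)
      = bernoulliLik p a / bernoulliLik p c := by
    rw [div_rpow ha₀ hc₀.le, div_rpow (sub_nonneg.2 ha₁) hc₁'.le, bernoulliLik, bernoulliLik]
    ring
  have hpos : 0 < bernoulliLik p c := by unfold bernoulliLik; positivity
  rw [← div_le_one hpos, ← ratio]
  exact amgm.trans mean_le_one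

theorem bernoulliLik_le_bernoulliLik_self {p a : ℝ} (hp₀ : 0 ≤ p) (hp₁ : p ≤ 1) (ha₀ : 0 ≤ a)
    (ha₁ : a ≤ 1) : bernoulliLik p a ≤ bernoulliLik p p := by
  rcases hp₀.eq_or_lt with rfl | hp₀
  · simpa [bernoulliLik] using ha₀
  rcases hp₁.eq_or_lt with rfl | hp₁
  · simpa [bernoulliLik] using ha₁
  exact bernoulliLik_le_of_mul_nonpos hp₀.le hp₁.le ha₀ ha₁ hp₀ hp₁ (by simp)

theorem LfrBin_eq_bernoulliLik (φ γ : ℝ) : LfrBin φ γ = bernoulliLik φ (probScoreOne γ) := by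
  rw [LfrBin, bernoulliLik, probScoreOne]
  ring_nf

theorem probScoreOne_nonneg {γ : ℝ} (h₀ : 0 ≤ γ) (h₁ : γ ≤ 1) : 0 ≤ probScoreOne γ := by
  unfold probScoreOne
  nlinarith

theorem probScoreOne_eq (γ : ℝ) : probScoreOne γ = 9 / 16 - (γ - 3 / 4) ^ 2 := by
  rw [probScoreOne]
  ring

theorem probScoreOne_le (γ : ℝ) : probScoreOne γ ≤ 9 / 16 := by
  rw [probScoreOne_eq]
  exact sub_le_self _ (sq_nonneg _)

theorem probScoreOne_smaller_root {φ : ℝ} (h : φ ≤ 9 / 16) :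
    probScoreOne ((3 - √(9 - 16 * φ)) / 4) = φ := by
  have hs : √(9 - 16 * φ) ^ 2 = 9 - 16 * φ := sq_sqrt (by linarith)
  rw [probScoreOne_eq]
  linear_combination -hs / 16

theorem stmt_0 (φ : ℝ) (hφ : φ ∈ Set.Icc (0 : ℝ) 1) :
    (φ ≥ 9 / 16 → ∀ γ ∈ Set.Icc (0 : ℝ) 1, LfrBin φ γ ≤ LfrBin φ (3 / 4)) ∧
    (φ < 9 / 16 → ∀ γ ∈ Set.Icc (0 : ℝ) 1,
      LfrBin φ γ ≤ LfrBin φ ((3 - Real.sqrt (9 - 16 * φ)) / 4)) := by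
  obtain ⟨hφ₀, hφ₁⟩ := hφ
  simp only [LfrBin_eq_bernoulliLik]
  refine ⟨fun h γ ⟨hγ₀, hγ₁⟩ => ?_, fun h γ ⟨hγ₀, hγ₁⟩ => ?_⟩
  · rw [show probScoreOne (3 / 4) = 9 / 16 by norm_num [probScoreOne]]
    exact bernoulliLik_le_of_mul_nonpos hφ₀ hφ₁ (probScoreOne_nonneg hγ₀ hγ₁)
      ((probScoreOne_le γ).trans (by norm_num)) (by norm_num) (by norm_num)
      (mul_nonpos_of_nonpos_of_nonneg (sub_nonpos.2 (probScoreOne_le γ)) (sub_nonneg.2 h))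
  · rw [probScoreOne_smaller_root h.le]
    exact bernoulliLik_le_bernoulliLik_self hφ₀ hφ₁ (probScoreOne_nonneg hγ₀ hγ₁)
      ((probScoreOne_le γ).trans (by norm_num))
end

section
/- Let (A_t), (B_t), (C_t) be real sequences with B_t ≥ 0 for all t, A_{t+1} ≤ A_t - B_t + C_t for all t, and ∑_{t=0}^∞ C_t convergent (absolutely summable). Then either A_t → -∞, or A_t converges to a finite limit and ∑_{t=0}^∞ B_t < ∞. -/
/-!
Subtracting the partial sums of `C` absorbs the perturbation: `D t = A t - ∑_{i<t} C i` satisfies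
`D (t+1) ≤ D t - B t`, so `D` is antitone and `∑_{i<n} B i ≤ D 0 - D n`. An antitone real sequence
either tends to `-∞` or converges, in which case it is bounded below by its limit and the partial sums
of `B` are bounded. Since `∑ C` converges, `A = D + ∑_{i<t} C i` inherits the same dichotomy.
-/

open Filter Finset Topology

section OrderedGroup

variable {α : Type*} [AddCommGroup α] [PartialOrder α] [IsOrderedAddMonoid α] {A B C : ℕ → α}

theorem sub_sum_range_succ_le (hrec : ∀ t, A (t + 1) ≤ A t - B t + C t) (t : ℕ) :
    A (t + 1) - ∑ i ∈ range (t + 1), C i ≤ A t - ∑ i ∈ range t, C i - B t := by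
  rw [sum_range_succ]
  calc A (t + 1) - (∑ i ∈ range t, C i + C t)
      ≤ A t - B t + C t - (∑ i ∈ range t, C i + C t) := sub_le_sub_right (hrec t) _
    _ = A t - ∑ i ∈ range t, C i - B t := by abel

theorem antitone_sub_sum_range (hB : ∀ t, 0 ≤ B t) (hrec : ∀ t, A (t + 1) ≤ A t - B t + C t) :
    Antitone fun t => A t - ∑ i ∈ range t, C i :=
  antitone_nat_of_succ_le fun t =>
    (sub_sum_range_succ_le hrec t).trans (sub_le_self _ (hB t))

theorem sum_range_le_sub_sub_sum_range (hrec : ∀ t, A (t + 1) ≤ A t - B t + C t) (n : ℕ) :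
    ∑ i ∈ range n, B i ≤ A 0 - (A n - ∑ i ∈ range n, C i) := by
  induction n with
  | zero => simp
  | succ n ih =>
    have hstep := sub_sum_range_succ_le hrec n
    rw [sum_range_succ]
    calc ∑ i ∈ range n, B i + B n
        ≤ A 0 - (A n - ∑ i ∈ range n, C i) + B n := add_le_add_left ih _
      _ = A 0 - (A n - ∑ i ∈ range n, C i - B n) := by abel
      _ ≤ A 0 - (A (n + 1) - ∑ i ∈ range (n + 1), C i) := sub_le_sub_left hstep _

end OrderedGroup

theorem summable_of_tendsto_sub_sum_range {A B C : ℕ → ℝ} {l : ℝ} (hB : ∀ t, 0 ≤ B t)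
    (hrec : ∀ t, A (t + 1) ≤ A t - B t + C t)
    (hl : Tendsto (fun t => A t - ∑ i ∈ range t, C i) atTop (𝓝 l)) :
    Summable B :=
  summable_of_sum_range_le hB fun n =>
    (sum_range_le_sub_sub_sum_range hrec n).trans <|
      sub_le_sub_left ((antitone_sub_sum_range hB hrec).le_of_tendsto hl n) _

theorem stmt_3 (A B C : ℕ → ℝ) (hB : ∀ t, 0 ≤ B t)
    (hrec : ∀ t, A (t + 1) ≤ A t - B t + C t)
    (hC : Summable fun t => |C t|) :
    Tendsto A atTop atBot ∨
      ((∃ a : ℝ, Tendsto A atTop (nhds a)) ∧ Summable B) := by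
  have hS : Tendsto (fun t => ∑ i ∈ range t, C i) atTop (𝓝 (∑' i, C i)) :=
    hC.of_abs.hasSum.tendsto_sum_nat
  have hA : A = (fun t => A t - ∑ i ∈ range t, C i) + fun t => ∑ i ∈ range t, C i := by
    ext t
    simp
  rcases tendsto_atTop_of_antitone (antitone_sub_sum_range hB hrec) with hbot | ⟨l, hl⟩
  · left
    rw [hA]
    exact hbot.atBot_add hS
  · right
    exact ⟨⟨l + ∑' i, C i, hA ▸ hl.add hS⟩, summable_of_tendsto_sub_sum_range hB hrec hl⟩
end

section
/- Let S ⊆ ℝ^d be compact convex, f differentiable with L-Lipschitz and bounded gradient on S, 0 < α < 2/L. Consider a sequence z^{t+1} = proj_S(z^t - α (∇f(z^t) + e_t)) with z^0 ∈ S and error terms satisfying ‖e_t‖ ≤ C d^t for some C > 0 and d ∈ [0,1). Then every limit point ẑ of (z^t) satisfies ẑ = proj_S(ẑ - α ∇f(ẑ)), i.e., ẑ is a stationary point of f over S. -/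
open scoped InnerProductSpace
open Filter Topology

/-! The variational inequality of the projection together with the descent lemma shows that each
step decreases `f` by at least `(1 / α - L / 2) ‖z (t + 1) - z t‖²`, up to an error
`diam S * ‖e t‖` which is summable. As `f` is bounded below on the compact set `S`, the squared
step lengths are summable, so `z (t + 1) - z t → 0`; since also `e t → 0` and the projection is
nonexpansive, the residual `z t - P (z t - α • ∇f (z t))` tends to `0`. The residual is continuous
on `S`, hence vanishes at every cluster point. -/

theorem MapClusterPt.apply_eq_of_tendsto_comp {X Y ι : Type*} [TopologicalSpace X]
    [TopologicalSpace Y] [T2Space Y] {F : Filter ι} {u : ι → X} {x : X} {s : Set X}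
    {g : X → Y} {y : Y} (hx : MapClusterPt x F u) (hs : IsClosed s) (hus : ∀ᶠ n in F, u n ∈ s)
    (hg : ContinuousOn g s) (hgu : Tendsto (g ∘ u) F (𝓝 y)) : g x = y := by
  have hxs : x ∈ s := hs.mem_of_mapClusterPt hx hus
  have hcomp : MapClusterPt (g x) F (g ∘ u) :=
    hx.tendsto_comp' ((hg x hxs).tendsto.mono_left
      (inf_le_inf_left _ (tendsto_principal.2 hus)))
  exact eq_of_nhds_neBot (hcomp.neBot.mono (inf_le_inf_left _ hgu))

theorem summable_of_le_sub_add {a b c : ℕ → ℝ} {m : ℝ} (ha : ∀ n, m ≤ a n) (hb : ∀ n, 0 ≤ b n)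
    (hc : Summable c) (hc₀ : ∀ n, 0 ≤ c n) (h : ∀ n, a (n + 1) ≤ a n - b n + c n) :
    Summable b := by
  refine summable_of_sum_range_le hb (c := a 0 - m + ∑' n, c n) fun n => ?_
  calc ∑ i ∈ Finset.range n, b i
      ≤ ∑ i ∈ Finset.range n, ((a i - a (i + 1)) + c i) :=
        Finset.sum_le_sum fun i _ => by linarith [h i]
    _ = a 0 - a n + ∑ i ∈ Finset.range n, c i := by
        rw [Finset.sum_add_distrib, Finset.sum_range_sub']
    _ ≤ a 0 - m + ∑' n, c n := by
        gcongr
        · exact ha n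
        · exact hc.sum_le_tsum _ fun i _ => hc₀ i

section Projection

variable {E : Type*} [NormedAddCommGroup E] [InnerProductSpace ℝ E]

def IsMetricProjection (S : Set E) (P : E → E) : Prop :=
  ∀ x, P x ∈ S ∧ ∀ w ∈ S, ‖x - P x‖ ≤ ‖x - w‖

variable {S : Set E} {P : E → E}

theorem IsMetricProjection.inner_sub_le_zero (hP : IsMetricProjection S P) (hS : Convex ℝ S)
    (x : E) {w : E} (hw : w ∈ S) : ⟪x - P x, w - P x⟫_ℝ ≤ 0 := by
  obtain ⟨hxS, hmin⟩ := hP x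
  have : Nonempty S := ⟨⟨P x, hxS⟩⟩
  have hbdd : BddBelow (Set.range fun w : S => ‖x - w‖) := ⟨0, by rintro _ ⟨w, rfl⟩; positivity⟩
  refine (norm_eq_iInf_iff_real_inner_le_zero hS hxS).1 ?_ w hw
  exact le_antisymm (le_ciInf fun w => hmin w w.2) (ciInf_le hbdd ⟨P x, hxS⟩)

theorem IsMetricProjection.norm_sub_le (hP : IsMetricProjection S P) (hS : Convex ℝ S)
    (x y : E) : ‖P x - P y‖ ≤ ‖x - y‖ := by
  have hx := hP.inner_sub_le_zero hS x (hP y).1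
  have hy := hP.inner_sub_le_zero hS y (hP x).1
  have hsq : ‖P x - P y‖ ^ 2 ≤ ⟪x - y, P x - P y⟫_ℝ := by
    have hsum : ⟪x - P x, P y - P x⟫_ℝ + ⟪y - P y, P x - P y⟫_ℝ
        = ‖P x - P y‖ ^ 2 - ⟪x - y, P x - P y⟫_ℝ := by
      rw [← real_inner_self_eq_norm_sq, ← neg_sub (P x) (P y), inner_neg_right]
      simp only [inner_sub_left]
      ring
    linarith
  have hcs := real_inner_le_norm (x - y) (P x - P y)
  nlinarith [norm_nonneg (P x - P y), norm_nonneg (x - y)]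

theorem IsMetricProjection.lipschitzWith_one (hP : IsMetricProjection S P) (hS : Convex ℝ S) :
    LipschitzWith 1 P :=
  LipschitzWith.of_dist_le_mul fun x y => by
    simpa only [NNReal.coe_one, one_mul, dist_eq_norm] using hP.norm_sub_le hS x y

end Projection

section ProjectedGradient

variable {E : Type*} [NormedAddCommGroup E] [InnerProductSpace ℝ E] [CompleteSpace E]
  {S : Set E} {f : E → ℝ} {L : ℝ}

theorem Convex.apply_le_add_inner_gradient_add_sq (hS : Convex ℝ S)
    (hf : ∀ x ∈ S, DifferentiableAt ℝ f x)
    (hlip : ∀ x ∈ S, ∀ y ∈ S, ‖gradient f x - gradient f y‖ ≤ L * ‖x - y‖)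
    {x y : E} (hx : x ∈ S) (hy : y ∈ S) :
    f y ≤ f x + ⟪gradient f x, y - x⟫_ℝ + L / 2 * ‖y - x‖ ^ 2 := by
  set c : ℝ → E := fun s => x + s • (y - x)
  have hcS : ∀ s ∈ Set.Icc (0 : ℝ) 1, c s ∈ S := fun s hs => hS.add_smul_sub_mem hx hy hs
  -- `φ` is antitone on `[0, 1]`; comparing its endpoints is the claim.
  set φ : ℝ → ℝ := fun s =>
    f (c s) - s * ⟪gradient f x, y - x⟫_ℝ - L / 2 * s ^ 2 * ‖y - x‖ ^ 2
  set φ' : ℝ → ℝ := fun s =>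
    ⟪gradient f (c s) - gradient f x, y - x⟫_ℝ - L * s * ‖y - x‖ ^ 2
  have hφ : ∀ s ∈ Set.Icc (0 : ℝ) 1, HasDerivAt φ (φ' s) s := by
    intro s hs
    have hc : HasDerivAt c (y - x) s := by
      simpa only [one_smul] using ((hasDerivAt_id' s).smul_const (y - x)).const_add x
    have hfc := (hf _ (hcS s hs)).hasGradientAt.hasFDerivAt.comp_hasDerivAt s hc
    refine ((hfc.fun_sub ((hasDerivAt_id' s).mul_const ⟪gradient f x, y - x⟫_ℝ)).fun_sub
      (((hasDerivAt_pow 2 s).const_mul (L / 2)).mul_const (‖y - x‖ ^ 2))).congr_deriv ?_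
    simp only [φ', InnerProductSpace.toDual_apply_apply, inner_sub_left]
    ring
  have hφ'_nonpos : ∀ s ∈ Set.Icc (0 : ℝ) 1, φ' s ≤ 0 := by
    intro s hs
    have hcx : ‖c s - x‖ = s * ‖y - x‖ := by
      simp [c, norm_smul, abs_of_nonneg hs.1]
    calc φ' s ≤ ‖gradient f (c s) - gradient f x‖ * ‖y - x‖ - L * s * ‖y - x‖ ^ 2 :=
          sub_le_sub_right (real_inner_le_norm _ _) _
      _ ≤ L * ‖c s - x‖ * ‖y - x‖ - L * s * ‖y - x‖ ^ 2 := by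
          gcongr; exact hlip _ (hcS s hs) _ hx
      _ = 0 := by rw [hcx]; ring
  have hanti : AntitoneOn φ (Set.Icc 0 1) :=
    antitoneOn_of_hasDerivWithinAt_nonpos (convex_Icc 0 1)
      (fun s hs => (hφ s hs).continuousAt.continuousWithinAt)
      (fun s hs => (hφ s (interior_subset hs)).hasDerivWithinAt)
      (fun s hs => hφ'_nonpos s (interior_subset hs))
  have := hanti (Set.left_mem_Icc.2 zero_le_one) (Set.right_mem_Icc.2 zero_le_one) zero_le_one
  simp only [φ, c, zero_smul, one_smul, add_zero, add_sub_cancel, zero_mul, one_mul, sub_zero,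
    one_pow, ne_eq, OfNat.ofNat_ne_zero, not_false_eq_true, zero_pow, mul_zero] at this
  linarith

theorem IsMetricProjection.apply_gradient_step_le {P : E → E} (hP : IsMetricProjection S P)
    (hS : Convex ℝ S) (hf : ∀ x ∈ S, DifferentiableAt ℝ f x)
    (hlip : ∀ x ∈ S, ∀ y ∈ S, ‖gradient f x - gradient f y‖ ≤ L * ‖x - y‖)
    {α : ℝ} (hα : 0 < α) {x : E} (hx : x ∈ S) (v : E) :
    f (P (x - α • (gradient f x + v))) ≤ f x
      - (1 / α - L / 2) * ‖P (x - α • (gradient f x + v)) - x‖ ^ 2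
      + ‖v‖ * ‖P (x - α • (gradient f x + v)) - x‖ := by
  set x' := P (x - α • (gradient f x + v))
  have hvi := hP.inner_sub_le_zero hS (x - α • (gradient f x + v)) hx
  have hvi' : ‖x' - x‖ ^ 2 ≤ α * (⟪gradient f x, x - x'⟫_ℝ + ⟪v, x - x'⟫_ℝ) := by
    rw [← inner_add_left, ← norm_neg, neg_sub, ← real_inner_self_eq_norm_sq,
      ← real_inner_smul_left]
    have : x - α • (gradient f x + v) - x' = (x - x') - α • (gradient f x + v) := by abel
    rw [this, inner_sub_left] at hvi
    linarith
  have hdesc := hS.apply_le_add_inner_gradient_add_sq hf hlip hx (y := x') (hP _).1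
  have hinner : ⟪gradient f x, x' - x⟫_ℝ = -⟪gradient f x, x - x'⟫_ℝ := by
    rw [← inner_neg_right, neg_sub]
  have hv : ⟪v, x - x'⟫_ℝ ≤ ‖v‖ * ‖x' - x‖ := by
    rw [← norm_neg (x' - x), neg_sub]; exact real_inner_le_norm _ _
  have hdiv : ‖x' - x‖ ^ 2 / α ≤ ⟪gradient f x, x - x'⟫_ℝ + ⟪v, x - x'⟫_ℝ :=
    (div_le_iff₀' hα).2 hvi'
  have : (1 / α - L / 2) * ‖x' - x‖ ^ 2 = ‖x' - x‖ ^ 2 / α - L / 2 * ‖x' - x‖ ^ 2 := by ring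
  linarith

theorem tendsto_succ_sub_of_projected_gradient {P : E → E} (hP : IsMetricProjection S P)
    (hS : Convex ℝ S) (hcomp : IsCompact S) (hf : ∀ x ∈ S, DifferentiableAt ℝ f x)
    (hlip : ∀ x ∈ S, ∀ y ∈ S, ‖gradient f x - gradient f y‖ ≤ L * ‖x - y‖)
    {α : ℝ} (hα : 0 < α) (hαL : α * L < 2) {e z : ℕ → E} (he : Summable fun t => ‖e t‖)
    (hzS : ∀ t, z t ∈ S) (hiter : ∀ t, z (t + 1) = P (z t - α • (gradient f (z t) + e t))) :
    Tendsto (fun t => z (t + 1) - z t) atTop (𝓝 0) := by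
  have hκ : 0 < 1 / α - L / 2 := by
    have : L / 2 < 1 / α := by rw [lt_div_iff₀ hα]; linarith
    linarith
  obtain ⟨m, hm⟩ := hcomp.bddBelow_image fun x hx => (hf x hx).continuousAt.continuousWithinAt
  have hdiam : ∀ t, ‖z (t + 1) - z t‖ ≤ Metric.diam S := fun t => by
    simpa only [dist_eq_norm] using Metric.dist_le_diam_of_mem hcomp.isBounded (hzS _) (hzS t)
  have hdescent : ∀ t, f (z (t + 1)) ≤
      f (z t) - (1 / α - L / 2) * ‖z (t + 1) - z t‖ ^ 2 + Metric.diam S * ‖e t‖ := fun t => by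
    have := hP.apply_gradient_step_le hS hf hlip hα (hzS t) (e t)
    rw [← hiter] at this
    linarith [mul_le_mul_of_nonneg_left (hdiam t) (norm_nonneg (e t))]
  have hsum : Summable fun t => (1 / α - L / 2) * ‖z (t + 1) - z t‖ ^ 2 :=
    summable_of_le_sub_add (fun t => hm ⟨z t, hzS t, rfl⟩) (fun t => by positivity)
      (he.mul_left _) (fun t => mul_nonneg Metric.diam_nonneg (norm_nonneg _)) hdescent
  have hsq : Tendsto (fun t => ‖z (t + 1) - z t‖ ^ 2) atTop (𝓝 0) := by
    simpa only [← mul_assoc, inv_mul_cancel₀ hκ.ne', one_mul, mul_zero] using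
      hsum.tendsto_atTop_zero.const_mul (1 / α - L / 2)⁻¹
  refine tendsto_zero_iff_norm_tendsto_zero.2 ?_
  simpa using hsq.sqrt

theorem tendsto_sub_gradient_step_of_tendsto_succ_sub {P : E → E} (hP : IsMetricProjection S P)
    (hS : Convex ℝ S) {α : ℝ} (hα : 0 < α) {e z : ℕ → E}
    (he : Tendsto (fun t => ‖e t‖) atTop (𝓝 0))
    (hiter : ∀ t, z (t + 1) = P (z t - α • (gradient f (z t) + e t)))
    (hstep : Tendsto (fun t => z (t + 1) - z t) atTop (𝓝 0)) :
    Tendsto (fun t => z t - P (z t - α • gradient f (z t))) atTop (𝓝 0) := by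
  refine squeeze_zero_norm (a := fun t => ‖z (t + 1) - z t‖ + α * ‖e t‖) (fun t => ?_)
    (by simpa using hstep.norm.add (he.const_mul α))
  have hperturb : ‖z (t + 1) - P (z t - α • gradient f (z t))‖ ≤ α * ‖e t‖ := by
    rw [hiter]
    refine (hP.norm_sub_le hS _ _).trans_eq ?_
    rw [smul_add, sub_add_eq_sub_sub, sub_sub_cancel_left, norm_neg, norm_smul,
      Real.norm_of_nonneg hα.le]
  calc ‖z t - P (z t - α • gradient f (z t))‖
      = ‖(z (t + 1) - P (z t - α • gradient f (z t))) - (z (t + 1) - z t)‖ := by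
        rw [sub_sub_sub_cancel_left]
    _ ≤ ‖z (t + 1) - z t‖ + α * ‖e t‖ := by
        linarith [norm_sub_le (z (t + 1) - P (z t - α • gradient f (z t))) (z (t + 1) - z t)]

end ProjectedGradient

theorem stmt_6_general {dim : ℕ} (S : Set (EuclideanSpace ℝ (Fin dim)))
    (hconv : Convex ℝ S) (hcomp : IsCompact S)
    (f : EuclideanSpace ℝ (Fin dim) → ℝ) (hf : Differentiable ℝ f)
    (L : ℝ)
    (hlip : ∀ x ∈ S, ∀ y ∈ S, ‖gradient f x - gradient f y‖ ≤ L * ‖x - y‖)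
    (α : ℝ) (hα : 0 < α) (hα2 : α < 2 / L)
    (P : EuclideanSpace ℝ (Fin dim) → EuclideanSpace ℝ (Fin dim))
    (hP : ∀ x, P x ∈ S ∧ ∀ w ∈ S, ‖x - P x‖ ≤ ‖x - w‖)
    (e : ℕ → EuclideanSpace ℝ (Fin dim)) (C d : ℝ)
    (hd : d ∈ Set.Ico (0 : ℝ) 1) (he : ∀ t, ‖e t‖ ≤ C * d ^ t)
    (z : ℕ → EuclideanSpace ℝ (Fin dim)) (hz0 : z 0 ∈ S)
    (hiter : ∀ t, z (t + 1) = P (z t - α • (gradient f (z t) + e t)))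
    (zh : EuclideanSpace ℝ (Fin dim)) (hcluster : MapClusterPt zh Filter.atTop z) :
    zh = P (zh - α • gradient f zh) := by
  have hαL : α * L < 2 := by
    rcases le_or_gt L 0 with hL_nonpos | hL_pos
    · nlinarith
    · exact (lt_div_iff₀ hL_pos).1 hα2
  have he_sum : Summable fun t => ‖e t‖ := .of_nonneg_of_le (fun t => norm_nonneg _) he
    ((summable_geometric_of_lt_one hd.1 hd.2).mul_left C)
  have hzS : ∀ t, z t ∈ S := fun t => by
    cases t with
    | zero => exact hz0
    | succ t => exact hiter t ▸ (hP _).1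
  have hstep := tendsto_succ_sub_of_projected_gradient hP hconv hcomp (fun x _ => hf x) hlip hα
    hαL he_sum hzS hiter
  have hgrad : ContinuousOn (gradient f) S :=
    (LipschitzOnWith.of_dist_le' fun x hx y hy => by
      simpa only [dist_eq_norm] using hlip x hx y hy).continuousOn
  have hresidual_lim := tendsto_sub_gradient_step_of_tendsto_succ_sub hP hconv hα
    he_sum.tendsto_atTop_zero hiter hstep
  have hresidual_cont : ContinuousOn (fun x => x - P (x - α • gradient f x)) S :=
    continuousOn_id.sub <| (IsMetricProjection.lipschitzWith_one hP hconv).continuous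
      |>.comp_continuousOn (continuousOn_id.sub (hgrad.const_smul α))
  exact sub_eq_zero.1 <| hcluster.apply_eq_of_tendsto_comp
    (g := fun x => x - P (x - α • gradient f x)) hcomp.isClosed (Eventually.of_forall hzS)
    hresidual_cont hresidual_lim

theorem stmt_6 {dim : ℕ} (S : Set (EuclideanSpace ℝ (Fin dim))) (hS : S.Nonempty)
    (hconv : Convex ℝ S) (hcomp : IsCompact S)
    (f : EuclideanSpace ℝ (Fin dim) → ℝ) (hf : Differentiable ℝ f)
    (L : ℝ) (hL : 0 < L)
    (hlip : ∀ x ∈ S, ∀ y ∈ S, ‖gradient f x - gradient f y‖ ≤ L * ‖x - y‖)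
    (M : ℝ) (hbdd : ∀ x ∈ S, ‖gradient f x‖ ≤ M)
    (α : ℝ) (hα : 0 < α) (hα2 : α < 2 / L)
    (P : EuclideanSpace ℝ (Fin dim) → EuclideanSpace ℝ (Fin dim))
    (hP : ∀ x, P x ∈ S ∧ ∀ w ∈ S, ‖x - P x‖ ≤ ‖x - w‖)
    (e : ℕ → EuclideanSpace ℝ (Fin dim)) (C d : ℝ) (hC : 0 < C)
    (hd : d ∈ Set.Ico (0 : ℝ) 1) (he : ∀ t, ‖e t‖ ≤ C * d ^ t)
    (z : ℕ → EuclideanSpace ℝ (Fin dim)) (hz0 : z 0 ∈ S)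
    (hiter : ∀ t, z (t + 1) = P (z t - α • (gradient f (z t) + e t)))
    (zh : EuclideanSpace ℝ (Fin dim)) (hcluster : MapClusterPt zh Filter.atTop z) :
    zh = P (zh - α • gradient f zh) :=
  stmt_6_general S hconv hcomp f hf L hlip α hα hα2 P hP e C d hd he z hz0 hiter zh hcluster
end

section
/- For the social-ranking model with communities c_ℓ = ℓ (ℓ = 1,…,C), semi-distance d(c_ℓ,c_m) = |ℓ - m|, binomial prior p_ℓ(γ) = C(C-1, ℓ-1) γ^{ℓ-1}(1-γ)^{C-ℓ}, and the fully relaxed likelihood L_FR(θ,γ) = ∏_{h=1}^{R}(∑_{ℓ,m=1}^{C} p_{h|ℓ,m}(θ) p_ℓ(γ) p_m(γ))^{n^{(h)}}, it holds that L_FR(θ, γ) = L_FR(θ, 1-γ) for all θ > 0 and γ ∈ [0,1]. -/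
/-- Mallows-type score model of the social-ranking set-up:
`p_{h|ℓ,m}(θ) ∝ exp(-(((R-h)/R - |ℓ-m|/C)/θ)²)` (with `h, ℓ, m` zero-indexed,
so the one-indexed score index is `h+1` and `d(c_ℓ,c_m) = |ℓ-m|`). -/
noncomputable def pSocialRank (R C : ℕ) (θ : ℝ) (h : Fin R) (ℓ m : Fin C) : ℝ :=
  Real.exp (-((((R : ℝ) - ((h : ℝ) + 1)) / R - |(ℓ : ℝ) - (m : ℝ)| / C) / θ) ^ 2) /
    ∑ h' : Fin R,
      Real.exp (-((((R : ℝ) - ((h' : ℝ) + 1)) / R - |(ℓ : ℝ) - (m : ℝ)| / C) / θ) ^ 2)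

/-- Binomial prior `p_ℓ(γ) = C(C-1, ℓ) γ^ℓ (1-γ)^(C-1-ℓ)` with `ℓ` zero-indexed. -/
noncomputable def binPrior (C : ℕ) (γ : ℝ) (ℓ : Fin C) : ℝ :=
  (C - 1).choose ℓ * γ ^ (ℓ : ℕ) * (1 - γ) ^ (C - 1 - (ℓ : ℕ))

/-- Fully relaxed likelihood of the social-ranking model. -/
noncomputable def LFRSocialRank (R C : ℕ) (n : Fin R → ℕ) (θ γ : ℝ) : ℝ :=
  ∏ h : Fin R,
    (∑ ℓ : Fin C, ∑ m : Fin C,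
      pSocialRank R C θ h ℓ m * binPrior C γ ℓ * binPrior C γ m) ^ (n h)

/-! Reversing the community labels, `ℓ ↦ C - 1 - ℓ`, preserves every distance `|ℓ - m|` and turns
the binomial prior at `γ` into the one at `1 - γ`; reindexing both sums of the mixture by this
reversal therefore identifies the factor at `γ` with the factor at `1 - γ`. -/

lemma Fin.cast_val_rev {C : ℕ} (ℓ : Fin C) : ((ℓ.rev : ℕ) : ℝ) = (C : ℝ) - 1 - ℓ := by
  have hℓ : (ℓ : ℕ) + 1 ≤ C := ℓ.2
  rw [Fin.val_rev]
  push_cast [Nat.cast_sub hℓ]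
  ring

lemma Fin.abs_cast_val_rev_sub {C : ℕ} (ℓ m : Fin C) :
    |((ℓ.rev : ℕ) : ℝ) - (m.rev : ℕ)| = |(ℓ : ℝ) - m| := by
  rw [Fin.cast_val_rev, Fin.cast_val_rev, ← abs_neg]
  ring_nf

lemma binPrior_one_sub_rev (C : ℕ) (γ : ℝ) (ℓ : Fin C) :
    binPrior C (1 - γ) ℓ.rev = binPrior C γ ℓ := by
  have hℓ : (ℓ : ℕ) ≤ C - 1 := Nat.le_sub_one_of_lt ℓ.2
  have hrev : (ℓ.rev : ℕ) = C - 1 - ℓ := by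
    rw [Fin.val_rev]; omega
  unfold binPrior
  rw [hrev, Nat.choose_symm hℓ, sub_sub_cancel, Nat.sub_sub_self hℓ]
  ring

lemma pSocialRank_rev_rev (R C : ℕ) (θ : ℝ) (h : Fin R) (ℓ m : Fin C) :
    pSocialRank R C θ h ℓ.rev m.rev = pSocialRank R C θ h ℓ m := by
  simp only [pSocialRank, Fin.abs_cast_val_rev_sub]

lemma sum_pSocialRank_mul_binPrior_one_sub (R C : ℕ) (θ γ : ℝ) (h : Fin R) :
    ∑ ℓ : Fin C, ∑ m : Fin C,
        pSocialRank R C θ h ℓ m * binPrior C (1 - γ) ℓ * binPrior C (1 - γ) m =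
      ∑ ℓ : Fin C, ∑ m : Fin C, pSocialRank R C θ h ℓ m * binPrior C γ ℓ * binPrior C γ m := by
  rw [← Equiv.sum_comp Fin.revPerm]
  refine Finset.sum_congr rfl fun ℓ _ => ?_
  rw [← Equiv.sum_comp Fin.revPerm]
  simp only [Fin.revPerm_apply, pSocialRank_rev_rev, binPrior_one_sub_rev]

theorem stmt_14_general (R C : ℕ) (n : Fin R → ℕ) (θ : ℝ)
    (γ : ℝ) :
    LFRSocialRank R C n θ γ = LFRSocialRank R C n θ (1 - γ) := by
  simp only [LFRSocialRank, sum_pSocialRank_mul_binPrior_one_sub]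

theorem stmt_14 (R C : ℕ) (hC : 1 ≤ C) (n : Fin R → ℕ) (θ : ℝ) (hθ : 0 < θ)
    (γ : ℝ) (hγ : γ ∈ Set.Icc (0 : ℝ) 1) :
    LFRSocialRank R C n θ γ = LFRSocialRank R C n θ (1 - γ) :=
  stmt_14_general R C n θ γ
end
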